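/- arXiv:1010.2960 — 6 statements merged into one kernel-verified Lean document; each statement's English description precedes it below -/
import Mathlib

section
/- Let B₁ and B₂ be positive definite symmetric real n×n matrices. For every x ∈ ℝⁿ, the infimum over all y, z ∈ ℝⁿ with y + z = 2x of (1/2)(⟨B₁y, y⟩ + ⟨B₂z, z⟩) equals 2⟨(B₁⁻¹+B₂⁻¹)⁻¹x, x⟩. -/
/-! Writing `C = (B₁⁻¹ + B₂⁻¹)⁻¹` and `p = C (2x)`, the split `y₀ = B₁⁻¹ p`, `z₀ = B₂⁻¹ p` satisfies
`y₀ + z₀ = 2x` and has equal gradients `B₁ y₀ = B₂ z₀ = p`, so its value is `⟨p, 2x⟩ = 4 ⟨C x, x⟩`.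
Any other split is `(y₀ + w, z₀ - w)`; because the gradients agree, the cross terms cancel and the
cost increases by `⟨B₁ w, w⟩ + ⟨B₂ w, w⟩ ≥ 0`. -/

open Matrix

variable {ι : Type*} [Fintype ι]

lemma Matrix.IsSymm.mulVec_dotProduct_comm {A : Matrix ι ι ℝ} (hA : A.IsSymm) (v w : ι → ℝ) :
    (A *ᵥ v) ⬝ᵥ w = (A *ᵥ w) ⬝ᵥ v := by
  rw [dotProduct_comm, dotProduct_mulVec, ← mulVec_transpose, hA.eq]

lemma Matrix.IsSymm.mulVec_add_dotProduct_add {A : Matrix ι ι ℝ} (hA : A.IsSymm) (a w : ι → ℝ) :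
    (A *ᵥ (a + w)) ⬝ᵥ (a + w) = (A *ᵥ a) ⬝ᵥ a + 2 * ((A *ᵥ a) ⬝ᵥ w) + (A *ᵥ w) ⬝ᵥ w := by
  rw [mulVec_add, add_dotProduct, dotProduct_add, dotProduct_add, hA.mulVec_dotProduct_comm w a]
  ring

lemma Matrix.PosSemidef.mulVec_dotProduct_self_nonneg {A : Matrix ι ι ℝ} (hA : A.PosSemidef)
    (v : ι → ℝ) : 0 ≤ (A *ᵥ v) ⬝ᵥ v := by
  simpa [dotProduct_comm] using hA.dotProduct_mulVec_nonneg v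

theorem quadForm_add_le_of_mulVec_eq {B₁ B₂ : Matrix ι ι ℝ} (h₁ : B₁.PosSemidef)
    (h₂ : B₂.PosSemidef) {y₀ z₀ : ι → ℝ} (hgrad : B₁ *ᵥ y₀ = B₂ *ᵥ z₀) {y z : ι → ℝ}
    (hyz : y + z = y₀ + z₀) :
    (B₁ *ᵥ y₀) ⬝ᵥ y₀ + (B₂ *ᵥ z₀) ⬝ᵥ z₀ ≤ (B₁ *ᵥ y) ⬝ᵥ y + (B₂ *ᵥ z) ⬝ᵥ z := by
  obtain ⟨w, rfl⟩ : ∃ w, y = y₀ + w := ⟨y - y₀, by abel⟩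
  obtain rfl : z = z₀ + -w := by linear_combination (norm := module) hyz
  have hsymm₁ : B₁.IsSymm := isHermitian_iff_isSymm.mp h₁.isHermitian
  have hsymm₂ : B₂.IsSymm := isHermitian_iff_isSymm.mp h₂.isHermitian
  rw [hsymm₁.mulVec_add_dotProduct_add, hsymm₂.mulVec_add_dotProduct_add, hgrad]
  simp only [mulVec_neg, dotProduct_neg, neg_dotProduct, neg_neg]
  linarith [h₁.mulVec_dotProduct_self_nonneg w, h₂.mulVec_dotProduct_self_nonneg w]

theorem isLeast_quadForm_infConv [DecidableEq ι] {B₁ B₂ : Matrix ι ι ℝ} (h₁ : B₁.PosDef)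
    (h₂ : B₂.PosDef) (v : ι → ℝ) :
    IsLeast {r | ∃ y z, y + z = v ∧ r = (B₁ *ᵥ y) ⬝ᵥ y + (B₂ *ᵥ z) ⬝ᵥ z}
      (((B₁⁻¹ + B₂⁻¹)⁻¹ *ᵥ v) ⬝ᵥ v) := by
  set p := (B₁⁻¹ + B₂⁻¹)⁻¹ *ᵥ v
  have hunit {A : Matrix ι ι ℝ} (hA : A.PosDef) : IsUnit A.det :=
    (isUnit_iff_isUnit_det A).mp hA.isUnit
  have hsum : B₁⁻¹ *ᵥ p + B₂⁻¹ *ᵥ p = v := by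
    rw [← add_mulVec, mulVec_mulVec, mul_nonsing_inv _ (hunit (h₁.inv.add h₂.inv)), one_mulVec]
  have hgrad {A : Matrix ι ι ℝ} (hA : A.PosDef) : A *ᵥ (A⁻¹ *ᵥ p) = p := by
    rw [mulVec_mulVec, mul_nonsing_inv _ (hunit hA), one_mulVec]
  have hval : (B₁ *ᵥ (B₁⁻¹ *ᵥ p)) ⬝ᵥ (B₁⁻¹ *ᵥ p) + (B₂ *ᵥ (B₂⁻¹ *ᵥ p)) ⬝ᵥ (B₂⁻¹ *ᵥ p) =
      p ⬝ᵥ v := by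
    rw [hgrad h₁, hgrad h₂, ← dotProduct_add, hsum]
  refine ⟨⟨_, _, hsum, hval.symm⟩, ?_⟩
  rintro r ⟨y, z, hyz, rfl⟩
  rw [← hval]
  exact quadForm_add_le_of_mulVec_eq h₁.posSemidef h₂.posSemidef
    ((hgrad h₁).trans (hgrad h₂).symm) (hyz.trans hsum.symm)

theorem stmt1 {n : ℕ} (B₁ B₂ : Matrix (Fin n) (Fin n) ℝ)
    (h₁ : B₁.PosDef) (h₂ : B₂.PosDef) (x : Fin n → ℝ) :
    sInf {r : ℝ | ∃ y z : Fin n → ℝ, y + z = (2 : ℝ) • x ∧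
        r = (1 / 2) * ((B₁ *ᵥ y) ⬝ᵥ y + (B₂ *ᵥ z) ⬝ᵥ z)} =
      2 * (((B₁⁻¹ + B₂⁻¹)⁻¹ *ᵥ x) ⬝ᵥ x) := by
  obtain ⟨⟨y₀, z₀, hsum, hval⟩, hle⟩ := isLeast_quadForm_infConv h₁ h₂ ((2 : ℝ) • x)
  have hscale : ((B₁⁻¹ + B₂⁻¹)⁻¹ *ᵥ (2 : ℝ) • x) ⬝ᵥ (2 : ℝ) • x =
      4 * (((B₁⁻¹ + B₂⁻¹)⁻¹ *ᵥ x) ⬝ᵥ x) := by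
    simp only [mulVec_smul, smul_dotProduct, dotProduct_smul, smul_eq_mul]
    ring
  refine IsLeast.csInf_eq ⟨⟨y₀, z₀, hsum, by linarith⟩, ?_⟩
  rintro r ⟨y, z, hyz, rfl⟩
  linarith [hle ⟨y, z, hyz, rfl⟩]
end

section
/- Let B₁ and B₂ be positive definite symmetric real n×n matrices. Then 1/(2·Tr((B₁⁻¹+B₂⁻¹)⁻¹)) ≥ 1/(2·Tr B₁) + 1/(2·Tr B₂). -/
/-!
The parallel sum `(B₁⁻¹ + B₂⁻¹)⁻¹` is dominated, as a quadratic form, by `t² B₁ + (1 - t)² B₂`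
for every real `t`: with `u = (B₁⁻¹ + B₂⁻¹)⁻¹ x`, add the Fenchel-type inequalities
`2 ⟪u, y⟫ ≤ ⟪y, B y⟫ + ⟪u, B⁻¹ u⟫` for `(B₁, t x)` and `(B₂, (1 - t) x)`. Taking traces and
choosing `t = Tr B₂ / (Tr B₁ + Tr B₂)` gives `Tr (B₁⁻¹ + B₂⁻¹)⁻¹ ≤ (1 / Tr B₁ + 1 / Tr B₂)⁻¹`.
-/

namespace Matrix

variable {ι : Type*} [Fintype ι] [DecidableEq ι]

theorem trace_le_trace_of_forall_dotProduct_mulVec_le {R : Type*} [Semiring R] [PartialOrder R]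
    [IsOrderedAddMonoid R] {A B : Matrix ι ι R}
    (h : ∀ x, x ⬝ᵥ (A *ᵥ x) ≤ x ⬝ᵥ (B *ᵥ x)) : A.trace ≤ B.trace :=
  Finset.sum_le_sum fun i _ => by
    simpa [mulVec_single, single_dotProduct] using h (Pi.single i 1)

namespace PosDef

theorem two_mul_dotProduct_le {B : Matrix ι ι ℝ} (hB : B.PosDef) (y u : ι → ℝ) :
    2 * (u ⬝ᵥ y) ≤ y ⬝ᵥ (B *ᵥ y) + u ⬝ᵥ (B⁻¹ *ᵥ u) := by
  -- expand `0 ≤ ⟪y - v, B (y - v)⟫` with `v = B⁻¹ u`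
  set v := B⁻¹ *ᵥ u
  have hBv : B *ᵥ v = u := by
    rw [mulVec_mulVec, mul_nonsing_inv _ hB.det_pos.ne'.isUnit, one_mulVec]
  have hsymm : v ⬝ᵥ (B *ᵥ y) = u ⬝ᵥ y := by
    rw [dotProduct_mulVec, ← mulVec_transpose,
      (isHermitian_iff_isSymm.mp hB.isHermitian).eq, hBv]
  have hsq := hB.posSemidef.dotProduct_mulVec_nonneg (y - v)
  simp only [star_trivial, mulVec_sub, hBv, dotProduct_sub, sub_dotProduct, hsymm] at hsq
  linarith [dotProduct_comm y u, dotProduct_comm v u]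

theorem dotProduct_inv_add_inv_inv_mulVec_le {B₁ B₂ : Matrix ι ι ℝ} (h₁ : B₁.PosDef)
    (h₂ : B₂.PosDef) {x y₁ y₂ : ι → ℝ} (hy : y₁ + y₂ = x) :
    x ⬝ᵥ ((B₁⁻¹ + B₂⁻¹)⁻¹ *ᵥ x) ≤ y₁ ⬝ᵥ (B₁ *ᵥ y₁) + y₂ ⬝ᵥ (B₂ *ᵥ y₂) := by
  set u := (B₁⁻¹ + B₂⁻¹)⁻¹ *ᵥ x
  have hu : B₁⁻¹ *ᵥ u + B₂⁻¹ *ᵥ u = x := by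
    rw [← add_mulVec, mulVec_mulVec,
      mul_nonsing_inv _ (h₁.inv.add h₂.inv).det_pos.ne'.isUnit, one_mulVec]
  have hxu : x ⬝ᵥ u = u ⬝ᵥ (B₁⁻¹ *ᵥ u) + u ⬝ᵥ (B₂⁻¹ *ᵥ u) := by
    rw [← dotProduct_add, hu, dotProduct_comm]
  have hux : u ⬝ᵥ x = u ⬝ᵥ y₁ + u ⬝ᵥ y₂ := by rw [← hy, dotProduct_add]
  linarith [h₁.two_mul_dotProduct_le y₁ u, h₂.two_mul_dotProduct_le y₂ u, dotProduct_comm x u]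

theorem trace_inv_add_inv_inv_le {B₁ B₂ : Matrix ι ι ℝ} (h₁ : B₁.PosDef) (h₂ : B₂.PosDef)
    (t : ℝ) : ((B₁⁻¹ + B₂⁻¹)⁻¹).trace ≤ t ^ 2 * B₁.trace + (1 - t) ^ 2 * B₂.trace := by
  rw [← smul_eq_mul, ← smul_eq_mul, ← trace_smul, ← trace_smul, ← trace_add]
  refine trace_le_trace_of_forall_dotProduct_mulVec_le fun x => ?_
  have hx : t • x + (1 - t) • x = x := by rw [← add_smul, add_sub_cancel, one_smul]
  refine (dotProduct_inv_add_inv_inv_mulVec_le h₁ h₂ hx).trans_eq ?_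
  simp only [add_mulVec, smul_mulVec, mulVec_smul, dotProduct_add, dotProduct_smul,
    smul_dotProduct, smul_eq_mul]
  ring

end PosDef

end Matrix

theorem inv_add_inv_le_inv_of_forall_le_sq_mul_add {a b c : ℝ} (ha : 0 < a) (hb : 0 < b)
    (hc : 0 < c) (h : ∀ t : ℝ, c ≤ t ^ 2 * a + (1 - t) ^ 2 * b) : a⁻¹ + b⁻¹ ≤ c⁻¹ := by
  have hmin : (b / (a + b)) ^ 2 * a + (1 - b / (a + b)) ^ 2 * b = (a⁻¹ + b⁻¹)⁻¹ := by
    field_simp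
    ring
  have := h (b / (a + b))
  rw [hmin] at this
  exact (le_inv_comm₀ hc (by positivity)).mp this

theorem stmt2 {n : ℕ} (B₁ B₂ : Matrix (Fin n) (Fin n) ℝ)
    (h₁ : B₁.PosDef) (h₂ : B₂.PosDef) :
    1 / (2 * ((B₁⁻¹ + B₂⁻¹)⁻¹).trace) ≥ 1 / (2 * B₁.trace) + 1 / (2 * B₂.trace) := by
  rcases isEmpty_or_nonempty (Fin n) with _ | _
  · -- all traces vanish, and both sides are `1 / 0 = 0`
    simp [Matrix.trace]
  have key := inv_add_inv_le_inv_of_forall_le_sq_mul_add h₁.trace_pos h₂.trace_pos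
    (h₁.inv.add h₂.inv).inv.trace_pos (h₁.trace_inv_add_inv_inv_le h₂)
  simp only [one_div, mul_inv]
  linarith
end

section
/- Let U ⊂ ℝⁿ be a bounded open set and let cov(U) denote its convex hull. If x₀ ∈ ∂cov(U) \ ∂U, then x₀ is not an extreme point of the closure of cov(U); consequently there exist distinct points y₀, z₀ ∈ ∂cov(U) such that x₀ lies in the open segment (y₀, z₀), and the whole segment [y₀, z₀] is contained in ∂cov(U). -/
/-!
In finite dimension the convex hull of a compact set is compact (Carathéodory bounds the number
of points needed), so for bounded `U` we get `closure (cov U) = cov (closure U)`, whose extreme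
points lie in `closure U`. A point `x₀ ∈ ∂cov(U) \ ∂U` is not in `closure U`, since otherwise it
would lie in `interior U ⊆ interior cov(U)`; hence it is not extreme and lies in an open segment
`(y₀, z₀)` of `closure (cov U)`. No point `w` of `[y₀, z₀]` can be interior to `cov U`: `x₀` is
either `w` or lies strictly between `w` and an endpoint, which would make `x₀` interior as well.
-/

open Set

section Compactness

variable {E : Type*} [AddCommGroup E] [Module ℝ E]

def convexCombinations (s : Set E) (k : ℕ) : Set E :=
  (fun wp : (Fin k → ℝ) × (Fin k → E) => ∑ i, wp.1 i • wp.2 i) ''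
    (stdSimplex ℝ (Fin k) ×ˢ univ.pi fun _ => s)

theorem convexCombinations_subset_convexHull (s : Set E) (k : ℕ) :
    convexCombinations s k ⊆ convexHull ℝ s := by
  rintro _ ⟨⟨w, p⟩, ⟨hw, hp⟩, rfl⟩
  exact (convex_convexHull ℝ s).sum_mem (fun i _ => hw.1 i) hw.2
    fun i _ => subset_convexHull ℝ s (hp i (mem_univ i))

/-- Carathéodory: `finrank ℝ E + 1` points suffice. -/
theorem convexHull_eq_iUnion_convexCombinations [FiniteDimensional ℝ E] (s : Set E) :
    convexHull ℝ s = ⋃ k : Fin (Module.finrank ℝ E + 2), convexCombinations s k := by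
  refine (iUnion_subset fun k : Fin _ => convexCombinations_subset_convexHull s k).antisymm' ?_
  intro x hx
  obtain ⟨ι, _, z, w, hzs, hz, hw0, hw1, rfl⟩ := eq_pos_convex_span_of_mem_convexHull hx
  have hcard : Fintype.card ι < Module.finrank ℝ E + 2 :=
    Nat.lt_succ_of_le (hz.card_le_finrank_succ.trans (Nat.succ_le_succ (Submodule.finrank_le _)))
  set e := Fintype.equivFin ι
  refine mem_iUnion.2 ⟨⟨_, hcard⟩, ⟨(w ∘ e.symm, z ∘ e.symm), ⟨⟨fun i => (hw0 _).le, ?_⟩,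
    fun i _ => hzs (mem_range_self _)⟩, ?_⟩⟩
  · simpa [e.symm.sum_comp] using hw1
  · exact e.symm.sum_comp fun i => w i • z i

variable [TopologicalSpace E] [ContinuousAdd E] [ContinuousSMul ℝ E]

theorem IsCompact.convexCombinations {s : Set E} (hs : IsCompact s) (k : ℕ) :
    IsCompact (convexCombinations s k) :=
  ((isCompact_stdSimplex ℝ _).prod (isCompact_univ_pi fun _ => hs)).image <|
    continuous_finsetSum _ fun i _ =>
      ((continuous_apply i).comp continuous_fst).smul ((continuous_apply i).comp continuous_snd)

theorem IsCompact.convexHull [FiniteDimensional ℝ E] {s : Set E} (hs : IsCompact s) :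
    IsCompact (convexHull ℝ s) := by
  rw [convexHull_eq_iUnion_convexCombinations]
  exact isCompact_iUnion fun k => hs.convexCombinations k

end Compactness

section Normed

variable {E : Type*} [NormedAddCommGroup E] [NormedSpace ℝ E] [FiniteDimensional ℝ E]

theorem Bornology.IsBounded.closure_convexHull_eq {s : Set E} (hs : Bornology.IsBounded s) :
    closure (convexHull ℝ s) = convexHull ℝ (closure s) :=
  (closure_minimal (convexHull_mono subset_closure) hs.isCompact_closure.convexHull.isClosed)
    |>.antisymm (convexHull_min (closure_mono (subset_convexHull ℝ s))
      (convex_convexHull ℝ s).closure)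

theorem Bornology.IsBounded.extremePoints_closure_convexHull_subset {s : Set E}
    (hs : Bornology.IsBounded s) :
    (closure (convexHull ℝ s)).extremePoints ℝ ⊆ closure s := by
  rw [hs.closure_convexHull_eq]
  exact extremePoints_convexHull_subset

end Normed

section Segment

variable {𝕜 E : Type*} [Field 𝕜] [LinearOrder 𝕜] [IsStrictOrderedRing 𝕜] [AddCommGroup E]
  [Module 𝕜 E]

theorem exists_ne_mem_openSegment_of_notMem_extremePoints {A : Set E} {x : E} (hxA : x ∈ A)
    (hx : x ∉ A.extremePoints 𝕜) :
    ∃ y ∈ A, ∃ z ∈ A, y ≠ z ∧ x ∈ openSegment 𝕜 y z := by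
  by_contra! h
  refine hx ⟨hxA, fun y hy z hz hxyz => ?_⟩
  obtain rfl | hyz := eq_or_ne y z
  · exact (openSegment_same 𝕜 y ▸ hxyz : x ∈ ({y} : Set E)).symm
  · exact absurd hxyz (h y hy z hz hyz)

variable [TopologicalSpace E] [IsTopologicalAddGroup E] [ContinuousConstSMul 𝕜 E]

theorem Convex.segment_subset_frontier {C : Set E} (hC : Convex 𝕜 C) {x y z : E}
    (hy : y ∈ closure C) (hz : z ∈ closure C) (hx : x ∈ openSegment 𝕜 y z)
    (hxC : x ∉ interior C) : segment 𝕜 y z ⊆ frontier C := by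
  refine fun w hw => ⟨hC.closure.segment_subset hy hz hw, fun hwC => hxC ?_⟩
  rw [segment_eq_image_lineMap] at hw
  obtain ⟨c, -, rfl⟩ := hw
  rcases openSegment_subset_union y z ⟨c, rfl⟩ hx with rfl | hyw | hwz
  · exact hwC
  · exact hC.openSegment_closure_interior_subset_interior hy hwC hyw
  · exact hC.openSegment_interior_closure_subset_interior hwC hz hwz

end Segment

theorem stmt9_general (n : ℕ) (U : Set (EuclideanSpace ℝ (Fin n)))
    (hb : Bornology.IsBounded U)
    (x₀ : EuclideanSpace ℝ (Fin n))
    (hx : x₀ ∈ frontier (convexHull ℝ U) \ frontier U) :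
    x₀ ∉ Set.extremePoints ℝ (closure (convexHull ℝ U)) ∧
      ∃ y₀ z₀ : EuclideanSpace ℝ (Fin n), y₀ ≠ z₀ ∧
        y₀ ∈ frontier (convexHull ℝ U) ∧ z₀ ∈ frontier (convexHull ℝ U) ∧
        x₀ ∈ openSegment ℝ y₀ z₀ ∧
        segment ℝ y₀ z₀ ⊆ frontier (convexHull ℝ U) := by
  obtain ⟨⟨hx_closure, hx_interior⟩, hx_frontierU⟩ := hx
  have hx_notin_closureU : x₀ ∉ closure U := fun h => hx_interior <|
    interior_mono (subset_convexHull ℝ U) <| closure_sdiff_frontier U ▸ ⟨h, hx_frontierU⟩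
  have hx_not_extreme : x₀ ∉ (closure (convexHull ℝ U)).extremePoints ℝ :=
    fun h => hx_notin_closureU (hb.extremePoints_closure_convexHull_subset h)
  obtain ⟨y₀, hy₀, z₀, hz₀, hyz, hx_seg⟩ :=
    exists_ne_mem_openSegment_of_notMem_extremePoints hx_closure hx_not_extreme
  have hsub := (convex_convexHull ℝ U).segment_subset_frontier hy₀ hz₀ hx_seg hx_interior
  exact ⟨hx_not_extreme, y₀, z₀, hyz, hsub (left_mem_segment ℝ y₀ z₀),
    hsub (right_mem_segment ℝ y₀ z₀), hx_seg, hsub⟩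

theorem stmt9 (n : ℕ) (hn : 2 ≤ n) (U : Set (EuclideanSpace ℝ (Fin n)))
    (hU : IsOpen U) (hb : Bornology.IsBounded U)
    (x₀ : EuclideanSpace ℝ (Fin n))
    (hx : x₀ ∈ frontier (convexHull ℝ U) \ frontier U) :
    x₀ ∉ Set.extremePoints ℝ (closure (convexHull ℝ U)) ∧
      ∃ y₀ z₀ : EuclideanSpace ℝ (Fin n), y₀ ≠ z₀ ∧
        y₀ ∈ frontier (convexHull ℝ U) ∧ z₀ ∈ frontier (convexHull ℝ U) ∧
        x₀ ∈ openSegment ℝ y₀ z₀ ∧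
        segment ℝ y₀ z₀ ⊆ frontier (convexHull ℝ U) :=
  stmt9_general n U hb x₀ hx
end

section
/- Let K ⊂ ℝⁿ be a compact convex set with nonempty interior. Then there exist a constant c_K > 0 and r_K > 0 such that for every boundary point y ∈ ∂K and every 0 < r < r_K, the (n−1)-dimensional Hausdorff measure of ∂B_r(y) ∩ K is at least c_K·r^{n−1}. -/
/-!
Fix a closed ball `closedBall x δ ⊆ K` and `M` with `K ⊆ closedBall x M`. For a boundary point
`y` the cone with apex `y` over `closedBall x δ` lies in `K` by convexity, and its opening angle
is bounded below in terms of `δ / M` only. Hence for `r < δ` the sphere `sphere y r` meets `K` in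
a cap around the direction `x - y` whose orthogonal projection onto `(x - y)ᗮ` contains a disc of
radius `κ r`, with `κ = δ / (M + δ)`. Orthogonal projection is `1`-Lipschitz, so it does not
increase `μH[n - 1]`.
-/

open MeasureTheory Metric Module Set
open scoped InnerProductSpace

variable {E : Type*} [NormedAddCommGroup E]

theorem exists_pos_le_hausdorffMeasure_closedBall [NormedSpace ℝ E] [FiniteDimensional ℝ E]
    [MeasurableSpace E] [BorelSpace E] {m : ℕ} (hE : finrank ℝ E = m) :
    ∃ c > (0 : ℝ), ∀ (x : E) (R : ℝ), 0 ≤ R →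
      ENNReal.ofReal (c * R ^ m) ≤ μH[m] (closedBall x R) := by
  subst hE
  refine ⟨(μH[finrank ℝ E] (ball (0 : E) 1)).toReal,
    ENNReal.toReal_pos (measure_ball_pos _ _ one_pos).ne' measure_ball_lt_top.ne,
    fun x R hR => ?_⟩
  rw [Measure.addHaar_closedBall _ _ hR, mul_comm, ENNReal.ofReal_mul (by positivity)]
  gcongr
  exact ENNReal.ofReal_toReal_le

theorem Convex.mem_of_dist_lineMap_le [NormedSpace ℝ E] {K : Set E} (hK : Convex ℝ K)
    {x y z : E} {δ t : ℝ} (hy : y ∈ K) (hball : closedBall x δ ⊆ K) (ht₀ : 0 ≤ t)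
    (ht₁ : t ≤ 1) (hz : dist z (AffineMap.lineMap y x t) ≤ t * δ) : z ∈ K := by
  rcases ht₀.eq_or_lt with rfl | ht₀
  · simp_all
  set w := x + t⁻¹ • (z - AffineMap.lineMap y x t)
  have hw : w ∈ closedBall x δ := by
    rw [mem_closedBall, dist_eq_norm, add_sub_cancel_left, norm_smul, Real.norm_eq_abs,
      abs_inv, abs_of_pos ht₀, ← dist_eq_norm, inv_mul_le_iff₀ ht₀]
    exact hz
  have hzw : AffineMap.lineMap y w t = z := by
    simp only [w, AffineMap.lineMap_apply_module']
    match_scalars <;> field_simp <;> ring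
  exact hzw ▸ hK.lineMap_mem hy (hball hw) ⟨ht₀.le, ht₁⟩

theorem exists_linearIsometry_orthogonal_with_lipschitz_leftInverse [InnerProductSpace ℝ E]
    {m : ℕ} (hE : finrank ℝ E = m + 1) {u : E} (hu : u ≠ 0) :
    ∃ (J : EuclideanSpace ℝ (Fin m) →ₗᵢ[ℝ] E) (P : E →L[ℝ] EuclideanSpace ℝ (Fin m)),
      LipschitzWith 1 P ∧ P u = 0 ∧ (∀ ξ, ⟪J ξ, u⟫_ℝ = 0) ∧ ∀ ξ, P (J ξ) = ξ := by
  have : Fact (finrank ℝ E = m + 1) := ⟨hE⟩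
  have : FiniteDimensional ℝ E := .of_fact_finrank_eq_succ m
  set W := (ℝ ∙ u)ᗮ
  set b := OrthonormalBasis.fromOrthogonalSpanSingleton (𝕜 := ℝ) m hu
  refine ⟨W.subtypeₗᵢ.comp b.repr.symm.toLinearIsometry,
    b.repr.toContinuousLinearEquiv.toContinuousLinearMap.comp W.orthogonalProjectionOnto,
    ?_, ?_, fun ξ => ?_, fun ξ => ?_⟩
  · exact mul_one (1 : NNReal) ▸
      b.repr.isometry.lipschitz.comp W.lipschitzWith_orthogonalProjectionOnto
  · simp [W, Submodule.orthogonalProjectionOnto_orthogonalComplement_singleton_eq_zero]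
  · exact Submodule.inner_left_of_mem_orthogonal (Submodule.mem_span_singleton_self u)
      (b.repr.symm ξ).2
  · simp [Submodule.orthogonalProjectionOnto_mem_subspace_eq_self]

theorem add_add_smul_mem_sphere_inter [InnerProductSpace ℝ E] {K : Set E} (hK : Convex ℝ K)
    {x y a : E} {δ κ r : ℝ} (hy : y ∈ K) (hball : closedBall x δ ⊆ K) (hδ : 0 ≤ δ)
    (hκδ : κ * (dist y x + δ) ≤ δ) (hr : 0 < r) (hrx : r ≤ dist y x)
    (ha : ⟪a, x - y⟫_ℝ = 0) (har : ‖a‖ ≤ κ * r) :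
    y + a + (√(r ^ 2 - ‖a‖ ^ 2) / dist y x) • (x - y) ∈ sphere y r ∩ K := by
  set d := dist y x
  set s := √(r ^ 2 - ‖a‖ ^ 2)
  have hd : 0 < d := hr.trans_le hrx
  have hxy : ‖x - y‖ = d := by rw [← dist_eq_norm, dist_comm]
  have hκ : 0 ≤ κ := nonneg_of_mul_nonneg_left ((norm_nonneg a).trans har) hr
  have hκ₁ : κ ≤ 1 := by nlinarith
  have har' : ‖a‖ ≤ r := har.trans (by nlinarith)
  have hs : s ^ 2 = r ^ 2 - ‖a‖ ^ 2 := Real.sq_sqrt (by nlinarith [norm_nonneg a])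
  have hs₀ : 0 ≤ s := Real.sqrt_nonneg _
  have hsr : s ≤ r := by nlinarith [norm_nonneg a]
  -- squared, this is `‖a‖² (d² + δ²) ≤ r² δ²`, which follows from `‖a‖ (d + δ) ≤ r δ`
  have hcone : ‖a‖ * d ≤ s * δ := by
    have h₁ : ‖a‖ * (d + δ) ≤ r * δ := by nlinarith
    have h₂ : (‖a‖ * (d + δ)) ^ 2 ≤ (r * δ) ^ 2 := pow_le_pow_left₀ (by positivity) h₁ 2
    refine (pow_le_pow_iff_left₀ (by positivity) (by positivity) two_ne_zero).1 ?_
    rw [mul_pow, mul_pow, hs]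
    nlinarith [mul_nonneg (mul_nonneg (sq_nonneg ‖a‖) hd.le) hδ]
  constructor
  · have hsq : ‖a + (s / d) • (x - y)‖ ^ 2 = r ^ 2 := by
      rw [norm_add_sq_real, inner_smul_right, ha, mul_zero, mul_zero, add_zero, norm_smul, hxy,
        Real.norm_of_nonneg (by positivity), mul_pow, div_pow, hs]
      field_simp
      ring
    rw [mem_sphere, dist_eq_norm, add_assoc, add_sub_cancel_left,
      ← sq_eq_sq₀ (norm_nonneg _) hr.le, hsq]
  · refine hK.mem_of_dist_lineMap_le hy hball (by positivity)
      ((div_le_one hd).2 (hsr.trans hrx)) ?_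
    rw [AffineMap.lineMap_apply_module', dist_eq_norm, add_comm (_ • _) y, add_right_comm,
      add_sub_cancel_left, div_mul_eq_mul_div, le_div_iff₀ hd]
    exact hcone

theorem hausdorffMeasure_closedBall_le_sphere_inter [InnerProductSpace ℝ E] [MeasurableSpace E]
    [BorelSpace E] {m : ℕ} (hE : finrank ℝ E = m + 1) {K : Set E} (hK : Convex ℝ K)
    {x y : E} {δ κ r : ℝ} (hy : y ∈ K) (hball : closedBall x δ ⊆ K) (hδ : 0 ≤ δ)
    (hκδ : κ * (dist y x + δ) ≤ δ) (hr : 0 < r) (hrx : r ≤ dist y x) :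
    μH[m] (closedBall (0 : EuclideanSpace ℝ (Fin m)) (κ * r)) ≤ μH[m] (sphere y r ∩ K) := by
  have hxy : x - y ≠ 0 := sub_ne_zero.2 fun h => by simp [h] at hrx; linarith
  obtain ⟨J, P, hP, hPu, hJu, hPJ⟩ :=
    exists_linearIsometry_orthogonal_with_lipschitz_leftInverse hE hxy
  set g := fun z => P (z - y)
  have hg : LipschitzWith 1 g := by
    have := hP.comp (LipschitzWith.id.sub (LipschitzWith.const y))
    rwa [add_zero, mul_one] at this
  have hcap : closedBall 0 (κ * r) ⊆ g '' (sphere y r ∩ K) := by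
    intro ξ hξ
    refine ⟨_, add_add_smul_mem_sphere_inter hK hy hball hδ hκδ hr hrx (hJu ξ) ?_, ?_⟩
    · rwa [J.norm_map, ← mem_closedBall_zero_iff]
    · simp [g, hPJ, hPu]
  calc μH[m] (closedBall 0 (κ * r)) ≤ μH[m] (g '' (sphere y r ∩ K)) := measure_mono hcap
    _ ≤ μH[m] (sphere y r ∩ K) := by
      simpa using hg.hausdorffMeasure_image_le (Nat.cast_nonneg m) (sphere y r ∩ K)

theorem stmt13_general (n : ℕ) (K : Set (EuclideanSpace ℝ (Fin n)))
    (hK : IsCompact K) (hconv : Convex ℝ K) (hint : (interior K).Nonempty) :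
    ∃ cK > (0 : ℝ), ∃ rK > (0 : ℝ), ∀ y ∈ frontier K, ∀ r : ℝ, 0 < r → r < rK →
      ENNReal.ofReal (cK * r ^ ((n : ℝ) - 1)) ≤
        μH[(n : ℝ) - 1] (Metric.sphere y r ∩ K) := by
  obtain ⟨x, hx⟩ := hint
  rcases n with _ | m
  · exact ⟨1, one_pos, 1, one_pos, fun y hy => absurd (Subsingleton.elim x y ▸ hx) hy.2⟩
  obtain ⟨δ, hδ, hball⟩ := nhds_basis_closedBall.mem_iff.1 (mem_interior_iff_mem_nhds.1 hx)
  obtain ⟨M, hM⟩ := hK.isBounded.subset_closedBall x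
  obtain ⟨c, hc, hcball⟩ :=
    exists_pos_le_hausdorffMeasure_closedBall (finrank_euclideanSpace_fin (𝕜 := ℝ) (n := m))
  have hM₀ : 0 ≤ M := dist_self x ▸ hM (hball (mem_closedBall_self hδ.le))
  set κ := δ / (M + δ)
  refine ⟨c * κ ^ m, by positivity, δ, hδ, ?_⟩
  intro y hy r hr hrδ
  have hyK : y ∈ K := hK.isClosed.frontier_subset hy
  have hδy : δ ≤ dist y x := not_lt.1 fun h => hy.2 <|
    interior_mono hball (interior_maximal ball_subset_closedBall isOpen_ball (mem_ball.2 h))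
  have hκδ : κ * (dist y x + δ) ≤ δ := by
    calc κ * (dist y x + δ) ≤ κ * (M + δ) := by gcongr; exact hM hyK
      _ = δ := div_mul_cancel₀ _ (by positivity)
  have hexp : ((m + 1 : ℕ) : ℝ) - 1 = m := by push_cast; ring
  rw [hexp, Real.rpow_natCast, mul_assoc, ← mul_pow]
  exact (hcball 0 _ (by positivity)).trans <|
    hausdorffMeasure_closedBall_le_sphere_inter finrank_euclideanSpace_fin hconv hyK hball hδ.le
      hκδ hr (hrδ.le.trans hδy)

theorem stmt13 (n : ℕ) (hn : 1 ≤ n) (K : Set (EuclideanSpace ℝ (Fin n)))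
    (hK : IsCompact K) (hconv : Convex ℝ K) (hint : (interior K).Nonempty) :
    ∃ cK > (0 : ℝ), ∃ rK > (0 : ℝ), ∀ y ∈ frontier K, ∀ r : ℝ, 0 < r → r < rK →
      ENNReal.ofReal (cK * r ^ ((n : ℝ) - 1)) ≤
        μH[(n : ℝ) - 1] (Metric.sphere y r ∩ K) :=
  stmt13_general n K hK hconv hint
end

section
/- Let K ⊂ B_R ⊂ ℝⁿ be a compact convex set with nonempty interior and 0 ∈ int K. Let y ∈ ∂B_R and let C(y,K) = {x : x ∈ [y,z] for some z ∈ K} be the cone over K with vertex y. Then there is a constant c > 0 depending only on K and n such that H^{n−1}(∂C(y,K)) ≥ c·R for n = 2, and in general H^{n−1}(∂C(y,K)) ≥ c·R·diam(K)^{n−2} for R ≥ 2·diam(K). -/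
open MeasureTheory Metric Set

set_option maxHeartbeats 1000000 in
lemma aux_core (m : ℕ) (K : Set (EuclideanSpace ℝ (Fin (m+2))))
    (hK : IsCompact K) (hconv : Convex ℝ K)
    (ε : ℝ) (hε : 0 < ε) (hball : Metric.ball 0 ε ⊆ K)
    (R : ℝ) (y : EuclideanSpace ℝ (Fin (m+2)))
    (hKR : K ⊆ Metric.ball 0 R) (hyR : ‖y‖ = R) :
    ENNReal.ofReal ((1/2) * (ε/(2*(m+1)))^m * R) ≤
      μH[((m+1 : ℕ) : ℝ)] (frontier (⋃ z ∈ K, segment ℝ y z)) := by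
  classical
  have hR : 0 < R := by
    have h0K : (0 : EuclideanSpace ℝ (Fin (m+2))) ∈ K := hball (by simpa using hε)
    have := hKR h0K
    simpa using this
  -- orthonormal basis with b 0 = R⁻¹ • y
  have hcard : Module.finrank ℝ (EuclideanSpace ℝ (Fin (m+2))) = Fintype.card (Fin (m+2)) := by
    simp
  have horth : Orthonormal ℝ (({0} : Set (Fin (m+2))).restrict
      (fun _ => R⁻¹ • y : Fin (m+2) → EuclideanSpace ℝ (Fin (m+2)))) := by
    constructor
    · intro i
      show ‖R⁻¹ • y‖ = 1
      rw [norm_smul, hyR, Real.norm_eq_abs, abs_of_pos (inv_pos.mpr hR),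
        inv_mul_cancel₀ hR.ne']
    · intro i j hij
      exact absurd (Subtype.ext (by
        have hi := i.2; have hj := j.2
        simp only [Set.mem_singleton_iff] at hi hj
        rw [hi, hj])) hij
  obtain ⟨b, hb⟩ := horth.exists_orthonormalBasis_extension_of_card_eq hcard
  have hb0 : b 0 = R⁻¹ • y := hb 0 rfl
  have hy : y = R • b 0 := by rw [hb0, smul_smul, mul_inv_cancel₀ hR.ne', one_smul]
  -- the 1-Lipschitz projection
  set g : EuclideanSpace ℝ (Fin (m+2)) → EuclideanSpace ℝ (Fin (m+1)) :=
    fun x => WithLp.toLp 2 (fun i : Fin (m+1) => b.repr x i.castSucc) with hg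
  have hglip : LipschitzWith 1 g := by
    rw [lipschitzWith_iff_dist_le_mul]
    intro x x'
    simp only [NNReal.coe_one, one_mul]
    rw [← b.repr.dist_map x x', EuclideanSpace.dist_eq, EuclideanSpace.dist_eq]
    apply Real.sqrt_le_sqrt
    simp only [hg]
    have hsplit : ∑ j : Fin (m+2), dist (b.repr x j) (b.repr x' j) ^ 2
        = (∑ i : Fin (m+1), dist (b.repr x i.castSucc) (b.repr x' i.castSucc) ^ 2)
          + dist (b.repr x (Fin.last (m+1))) (b.repr x' (Fin.last (m+1))) ^ 2 :=
      Fin.sum_univ_castSucc _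
    rw [hsplit]
    exact le_add_of_nonneg_right (by positivity)
  -- the cone
  set C : Set (EuclideanSpace ℝ (Fin (m+2))) := ⋃ z ∈ K, segment ℝ y z with hC
  have hCconv : Convex ℝ C := by
    rw [hC, ← convexJoin_singleton_left]
    exact (convex_singleton y).convexJoin hconv
  have hCcomp : IsCompact C := by
    have himg : C = (fun p : ℝ × EuclideanSpace ℝ (Fin (m+2)) =>
        (1 - p.1) • y + p.1 • p.2) '' (Set.Icc (0:ℝ) 1 ×ˢ K) := by
      rw [hC]
      ext x
      simp only [Set.mem_iUnion, Set.mem_image, Set.mem_prod, Set.mem_Icc, segment_eq_image,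
        Prod.exists]
      constructor
      · rintro ⟨z, hz, ⟨t, ht, rfl⟩⟩
        exact ⟨t, z, ⟨ht, hz⟩, rfl⟩
      · rintro ⟨t, z, ⟨ht, hz⟩, rfl⟩
        exact ⟨z, hz, ⟨t, ht, rfl⟩⟩
    rw [himg]
    exact (isCompact_Icc.prod hK).image (by fun_prop)
  -- fibers of g hit the frontier
  have hu1 : ‖b (Fin.last (m+1))‖ = 1 := b.orthonormal.1 _
  have hgu : ∀ (x : EuclideanSpace ℝ (Fin (m+2))) (s : ℝ),
      g (x + s • b (Fin.last (m+1))) = g x := by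
    intro x s
    ext i
    simp only [hg]
    rw [map_add, _root_.map_smul]
    have hrs : b.repr (b (Fin.last (m+1))) = EuclideanSpace.single (Fin.last (m+1)) 1 :=
      b.repr_self _
    simp [hrs, EuclideanSpace.single_apply, (Fin.castSucc_lt_last i).ne]
  have hfib : ∀ x ∈ C, ∃ x' ∈ frontier C, g x' = g x := by
    intro x hx
    set u := b (Fin.last (m+1)) with hu
    set S : Set ℝ := {s : ℝ | x + s • u ∈ C} with hS
    have hS0 : (0:ℝ) ∈ S := by simp [hS, hx]
    obtain ⟨M, hM⟩ := hCcomp.isBounded.subset_closedBall 0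
    have hSsub : S ⊆ Set.Icc (-(M + ‖x‖)) (M + ‖x‖) := by
      intro s hs
      have h1 : ‖x + s • u‖ ≤ M := by
        have := hM hs
        simpa [dist_eq_norm] using this
      have h2 : |s| = ‖(x + s • u) - x‖ := by
        rw [add_sub_cancel_left, norm_smul, hu1, mul_one, Real.norm_eq_abs]
      have h3 : ‖(x + s • u) - x‖ ≤ M + ‖x‖ := by
        calc ‖(x + s • u) - x‖ ≤ ‖x + s • u‖ + ‖x‖ := norm_sub_le _ _
          _ ≤ M + ‖x‖ := by linarith
      exact abs_le.mp (by linarith [h2 ▸ h3])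
    have hScl : IsClosed S := hCcomp.isClosed.preimage
      (show Continuous (fun s : ℝ => x + s • u) by fun_prop)
    have hScomp : IsCompact S := isCompact_Icc.of_isClosed_subset hScl hSsub
    have hmem : sSup S ∈ S := hScomp.sSup_mem ⟨0, hS0⟩
    refine ⟨x + sSup S • u, ?_, hgu x _⟩
    rw [frontier, hCcomp.isClosed.closure_eq]
    refine ⟨hmem, fun hint => ?_⟩
    obtain ⟨r, hr, hball'⟩ := Metric.isOpen_iff.mp isOpen_interior _ hint
    have hmem2 : sSup S + r/2 ∈ S := by
      have hb2 : x + (sSup S + r/2) • u ∈ Metric.ball (x + sSup S • u) r := by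
        rw [Metric.mem_ball, dist_eq_norm]
        have heq : x + (sSup S + r/2) • u - (x + sSup S • u) = (r/2) • u := by
          module
        rw [heq, norm_smul, hu1, mul_one, Real.norm_eq_abs, abs_of_pos (by linarith)]
        linarith
      show x + (sSup S + r/2) • u ∈ C
      exact interior_subset (hball' hb2)
    have hle := le_csSup hScomp.bddAbove hmem2
    linarith
  -- the box
  set δ : ℝ := ε / (4 * (m+1)) with hδdef
  have hδ : 0 < δ := by positivity
  set Q : Set (EuclideanSpace ℝ (Fin (m+1))) :=
    WithLp.ofLp ⁻¹' Set.univ.pi (fun i => if i = 0 then Set.Icc 0 (R/2) else Set.Icc (-δ) δ) with hQ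
  have hQsub : Q ⊆ g '' C := by
    intro q hq
    rw [hQ, Set.mem_preimage, Set.mem_pi] at hq
    have hq0 : q 0 ∈ Set.Icc 0 (R/2) := by simpa using hq 0 (Set.mem_univ _)
    have hqi : ∀ i : Fin (m+1), i ≠ 0 → q i ∈ Set.Icc (-δ) δ := by
      intro i hi
      have := hq i (Set.mem_univ _)
      simpa [hi] using this
    set t : ℝ := q 0 / R with htdef
    have ht0 : 0 ≤ t := div_nonneg hq0.1 hR.le
    have ht2 : t ≤ 1/2 := by
      rw [htdef, div_le_iff₀ hR]
      linarith [hq0.2]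
    have h1tpos : 0 < 1 - t := by linarith
    set w : EuclideanSpace ℝ (Fin (m+2)) :=
      ∑ i ∈ Finset.univ.erase (0 : Fin (m+1)), q i • b i.castSucc with hw
    set z : EuclideanSpace ℝ (Fin (m+2)) := (1 - t)⁻¹ • w with hz
    have hm1 : (0:ℝ) < (m:ℝ) + 1 := by positivity
    have hwnorm : ‖w‖ ≤ ((m:ℝ)+1) * δ := by
      calc ‖w‖ ≤ ∑ i ∈ Finset.univ.erase (0 : Fin (m+1)), ‖q i • b i.castSucc‖ :=
            norm_sum_le _ _
        _ ≤ ∑ _i ∈ Finset.univ.erase (0 : Fin (m+1)), δ := by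
            apply Finset.sum_le_sum
            intro i hi
            rw [norm_smul, b.orthonormal.1, mul_one, Real.norm_eq_abs]
            exact abs_le.mpr ⟨(hqi i (Finset.ne_of_mem_erase hi)).1,
              (hqi i (Finset.ne_of_mem_erase hi)).2⟩
        _ ≤ ((m:ℝ)+1) * δ := by
            rw [Finset.sum_const, nsmul_eq_mul]
            have hcle : ((Finset.univ.erase (0 : Fin (m+1))).card : ℝ) ≤ (m:ℝ)+1 := by
              have h1 := Finset.card_erase_le (s := (Finset.univ : Finset (Fin (m+1))))
                (a := (0 : Fin (m+1)))
              have h2 : (Finset.univ : Finset (Fin (m+1))).card = m+1 := by simp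
              rw [h2] at h1
              exact_mod_cast h1
            nlinarith [hδ.le]
    have hznorm : ‖z‖ < ε := by
      rw [hz, norm_smul, Real.norm_eq_abs, abs_of_pos (inv_pos.mpr h1tpos)]
      have h2' : (1-t)⁻¹ ≤ 2 := by
        rw [inv_le_comm₀ h1tpos (by norm_num)]
        linarith
      have hδe : ((m:ℝ)+1) * δ = ε/4 := by
        rw [hδdef]
        field_simp
      have hwn : 0 ≤ ‖w‖ := norm_nonneg _
      calc (1-t)⁻¹ * ‖w‖ ≤ 2 * (((m:ℝ)+1) * δ) :=
            mul_le_mul h2' hwnorm hwn (by norm_num)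
        _ = ε/2 := by rw [hδe]; ring
        _ < ε := by linarith
    have hzK : z ∈ K := hball (mem_ball_zero_iff.mpr hznorm)
    refine ⟨t • y + (1 - t) • z, ?_, ?_⟩
    · exact Set.mem_iUnion₂.mpr ⟨z, hzK, ⟨t, 1-t, ht0, by linarith, by ring, rfl⟩⟩
    · have hbij : ∀ j k : Fin (m+2), (inner ℝ (b j) (b k) : ℝ) = if j = k then 1 else 0 :=
        fun j k => orthonormal_iff_ite.mp b.orthonormal j k
      ext i
      simp only [hg]
      rw [b.repr_apply_apply]
      rw [inner_add_right, real_inner_smul_right, real_inner_smul_right]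
      have hyinner : (inner ℝ (b i.castSucc) y : ℝ) = if i = 0 then R else 0 := by
        rw [hy, real_inner_smul_right, hbij]
        by_cases h : i = 0
        · subst h
          rw [if_pos Fin.castSucc_zero, if_pos rfl, mul_one]
        · rw [if_neg (by simpa [Fin.castSucc_eq_zero_iff] using h), if_neg h, mul_zero]
      have hzinner : (inner ℝ (b i.castSucc) z : ℝ) = (1-t)⁻¹ * (if i = 0 then 0 else q i) := by
        rw [hz, real_inner_smul_right, hw, inner_sum]
        congr 1
        have hterm : ∀ j ∈ Finset.univ.erase (0 : Fin (m+1)),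
            (inner ℝ (b i.castSucc) (q j • b j.castSucc) : ℝ) = if i = j then q j else 0 := by
          intro j _
          rw [real_inner_smul_right, hbij]
          simp only [Fin.castSucc_inj]
          by_cases h : i = j
          · rw [if_pos h, if_pos h, mul_one]
          · rw [if_neg h, if_neg h, mul_zero]
        rw [Finset.sum_congr rfl hterm, Finset.sum_ite_eq]
        by_cases h : i = 0
        · simp [h]
        · simp [Finset.mem_erase, h]
      rw [hyinner, hzinner]
      by_cases h : i = 0
      · rw [if_pos h, if_pos h, mul_zero, mul_zero, add_zero, htdef, h,
          div_mul_cancel₀ _ hR.ne']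
      · rw [if_neg h, if_neg h, mul_zero, zero_add, ← mul_assoc,
          mul_inv_cancel₀ h1tpos.ne', one_mul]
  have hQfront : Q ⊆ g '' (frontier C) := by
    intro q hq
    obtain ⟨x, hx, rfl⟩ := hQsub hq
    obtain ⟨x', hx', hgx⟩ := hfib x hx
    exact ⟨x', hx', hgx⟩
  -- measure of the box
  have hQmeas : ENNReal.ofReal ((1/2) * (ε/(2*(m+1)))^m * R) ≤
      μH[((m+1 : ℕ) : ℝ)] Q := by
    set Q' : Set (Fin (m+1) → ℝ) :=
      Set.univ.pi (fun i => if i = 0 then Set.Icc 0 (R/2) else Set.Icc (-δ) δ) with hQ'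
    have himg : (@WithLp.ofLp 2 (Fin (m+1) → ℝ)) '' Q = Q' := by
      ext p
      constructor
      · rintro ⟨a, ha, rfl⟩
        exact ha
      · intro hp
        exact ⟨WithLp.toLp 2 p, hp, rfl⟩
    have hle : μH[((m+1 : ℕ) : ℝ)] Q' ≤ μH[((m+1 : ℕ) : ℝ)] Q := by
      have hlip := PiLp.lipschitzWith_ofLp 2 (fun _ : Fin (m+1) => ℝ)
      have := hlip.hausdorffMeasure_image_le (s := Q) (d := ((m+1 : ℕ) : ℝ)) (by positivity)
      rw [himg] at this
      simpa using this
    refine le_trans ?_ hle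
    have hμ : (μH[((m+1 : ℕ) : ℝ)] : Measure (Fin (m+1) → ℝ)) = volume := by
      have := MeasureTheory.hausdorffMeasure_pi_real (ι := Fin (m+1))
      simpa using this
    rw [hμ, hQ', volume_pi_pi]
    have hprod : (∏ i : Fin (m+1),
        volume (if i = 0 then Set.Icc (0:ℝ) (R/2) else Set.Icc (-δ) δ))
        = ENNReal.ofReal (R/2) * (ENNReal.ofReal (2*δ))^m := by
      rw [Fin.prod_univ_succ]
      have h0 : (if (0 : Fin (m+1)) = 0 then Set.Icc (0:ℝ) (R/2) else Set.Icc (-δ) δ)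
          = Set.Icc (0:ℝ) (R/2) := if_pos rfl
      have hsucc : ∀ i : Fin m,
          (if i.succ = 0 then Set.Icc (0:ℝ) (R/2) else Set.Icc (-δ) δ) = Set.Icc (-δ) δ :=
        fun i => if_neg (Fin.succ_ne_zero i)
      rw [h0, Finset.prod_congr rfl (fun i _ => by rw [hsucc i]),
        Real.volume_Icc, Real.volume_Icc, Finset.prod_const, Finset.card_univ,
        Fintype.card_fin, sub_zero]
      have hdd : δ - -δ = 2*δ := by ring
      rw [hdd]
    rw [hprod, ← ENNReal.ofReal_pow (by positivity), ← ENNReal.ofReal_mul (by positivity)]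
    apply ENNReal.ofReal_le_ofReal
    have h2δ : 2*δ = ε/(2*((m:ℝ)+1)) := by
      rw [hδdef]
      field_simp
      ring
    rw [h2δ]
    apply le_of_eq
    ring
  calc ENNReal.ofReal ((1/2) * (ε/(2*(m+1)))^m * R) ≤ μH[((m+1 : ℕ) : ℝ)] Q := hQmeas
    _ ≤ μH[((m+1 : ℕ) : ℝ)] (g '' frontier C) := measure_mono hQfront
    _ ≤ μH[((m+1 : ℕ) : ℝ)] (frontier C) := by
        have := hglip.hausdorffMeasure_image_le (s := frontier C)
          (d := ((m+1 : ℕ) : ℝ)) (by positivity)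
        simpa using this

theorem stmt14 (n : ℕ) (hn : 2 ≤ n) (K : Set (EuclideanSpace ℝ (Fin n)))
    (hK : IsCompact K) (hconv : Convex ℝ K) (h0 : 0 ∈ interior K) :
    ∃ c > (0 : ℝ), ∀ R : ℝ, ∀ y : EuclideanSpace ℝ (Fin n),
      K ⊆ Metric.ball 0 R → ‖y‖ = R →
        (2 * Metric.diam K ≤ R →
          ENNReal.ofReal (c * R * Metric.diam K ^ (n - 2)) ≤
            μH[(n : ℝ) - 1] (frontier (⋃ z ∈ K, segment ℝ y z))) ∧
        (n = 2 →
          ENNReal.ofReal (c * R) ≤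
            μH[(n : ℝ) - 1] (frontier (⋃ z ∈ K, segment ℝ y z))) := by
  obtain ⟨m, rfl⟩ : ∃ m, n = m + 2 := ⟨n - 2, by omega⟩
  obtain ⟨ε, hε, hball⟩ := Metric.isOpen_iff.mp isOpen_interior 0 h0
  have hballK : Metric.ball 0 ε ⊆ K := hball.trans interior_subset
  set c' : ℝ := (1/2) * (ε/(2*((m:ℝ)+1)))^m with hc'
  have hc'pos : 0 < c' := by rw [hc']; positivity
  have hdiam : 0 ≤ Metric.diam K := Metric.diam_nonneg
  refine ⟨c' / (1 + Metric.diam K)^m, by positivity, ?_⟩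
  intro R y hKR hyR
  have hd : ((m+2 : ℕ) : ℝ) - 1 = ((m+1 : ℕ) : ℝ) := by push_cast; ring
  have hcore := aux_core m K hK hconv ε hε hballK R y hKR hyR
  rw [hd]
  have hR0 : 0 ≤ R := hyR ▸ norm_nonneg y
  constructor
  · intro _
    refine le_trans (ENNReal.ofReal_le_ofReal ?_) hcore
    simp only [Nat.add_sub_cancel]
    have h1 : Metric.diam K ^ m ≤ (1 + Metric.diam K)^m :=
      pow_le_pow_left₀ hdiam (by linarith) m
    have hpow : 0 < (1 + Metric.diam K)^m := by positivity
    calc c' / (1 + Metric.diam K)^m * R * Metric.diam K ^ m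
        = (c' * R) * (Metric.diam K ^ m / (1 + Metric.diam K)^m) := by ring
      _ ≤ (c' * R) * 1 :=
          mul_le_mul_of_nonneg_left ((div_le_one hpow).mpr h1)
            (mul_nonneg hc'pos.le hR0)
      _ = c' * R := mul_one _
  · intro _
    have hm0 : m = 0 := by omega
    subst hm0
    rw [show c' / (1 + Metric.diam K)^0 = c' by simp]
    exact hcore
end

section
/- Let P₁ = {(−1, x', e) : e > ⟨B₁x', x'⟩} and P₂ = {(1, x', e) : e > ⟨B₂x', x'⟩} in ℝ × ℝ^{n−2} × ℝ = ℝⁿ, with B₁, B₂ symmetric positive definite (n−2)×(n−2) matrices. Then the intersection of the convex hull of P₁ ∪ P₂ with the hyperplane {x₁ = 0} equals {(0, x', e) : e > 2⟨(B₁⁻¹+B₂⁻¹)⁻¹x', x'⟩}. -/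
open Matrix

lemma dot_symm {m : ℕ} {B : Matrix (Fin m) (Fin m) ℝ} (hB : B.IsHermitian)
    (x y : Fin m → ℝ) : (B *ᵥ x) ⬝ᵥ y = (B *ᵥ y) ⬝ᵥ x := by
  rw [dotProduct_comm, Matrix.dotProduct_mulVec, ← Matrix.mulVec_transpose,
    ← Matrix.conjTranspose_eq_transpose_of_trivial, hB.eq]

lemma q_nonneg {m : ℕ} {B : Matrix (Fin m) (Fin m) ℝ} (hB : B.PosSemidef)
    (x : Fin m → ℝ) : 0 ≤ (B *ᵥ x) ⬝ᵥ x := by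
  have := hB.dotProduct_mulVec_nonneg x
  simpa [dotProduct_comm] using this

lemma q_expand {m : ℕ} {B : Matrix (Fin m) (Fin m) ℝ} (hB : B.IsHermitian)
    (x y : Fin m → ℝ) : (B *ᵥ (x + y)) ⬝ᵥ (x + y)
      = (B *ᵥ x) ⬝ᵥ x + 2 * ((B *ᵥ x) ⬝ᵥ y) + (B *ᵥ y) ⬝ᵥ y := by
  simp only [Matrix.mulVec_add, add_dotProduct, dotProduct_add]
  rw [dot_symm hB y x]; ring

/-- Convexity of the parabolic region in the hyperplane `x₁ = c`. -/
lemma conv_epi {m : ℕ} {B : Matrix (Fin m) (Fin m) ℝ} (hB : B.PosSemidef) (c : ℝ) :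
    Convex ℝ {p : ℝ × (Fin m → ℝ) × ℝ | p.1 = c ∧ (B *ᵥ p.2.1) ⬝ᵥ p.2.1 < p.2.2} := by
  rintro ⟨c₁, x, e₁⟩ ⟨hcx, hx⟩ ⟨c₂, y, e₂⟩ ⟨hcy, hy⟩ a b ha hb hab
  simp only at hcx hcy hx hy
  constructor
  · simp only [Prod.fst_add, Prod.smul_fst, smul_eq_mul]
    rw [hcx, hcy]
    linear_combination c * hab
  · have key : (B *ᵥ (a • x + b • y)) ⬝ᵥ (a • x + b • y)
        = a * ((B *ᵥ x) ⬝ᵥ x) + b * ((B *ᵥ y) ⬝ᵥ y)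
          - a * b * ((B *ᵥ (x - y)) ⬝ᵥ (x - y)) := by
      have e1 := q_expand hB.1 (a • x) (b • y)
      have e2 := q_expand hB.1 x (-y)
      simp only [Matrix.mulVec_smul, smul_dotProduct, dotProduct_smul, smul_eq_mul,
        Matrix.mulVec_neg, neg_dotProduct, dotProduct_neg, neg_neg, sub_eq_add_neg] at e1 e2 ⊢
      rw [e1, e2]
      have hb' : b = 1 - a := by linarith
      subst hb'; ring
    have hnn := q_nonneg hB (x - y)
    have hlt : a * ((B *ᵥ x) ⬝ᵥ x) + b * ((B *ᵥ y) ⬝ᵥ y) < a * e₁ + b * e₂ := by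
      rcases ha.lt_or_eq with ha' | ha'
      · have h1 : a * ((B *ᵥ x) ⬝ᵥ x) < a * e₁ := by nlinarith
        have h2 : b * ((B *ᵥ y) ⬝ᵥ y) ≤ b * e₂ := by nlinarith
        linarith
      · have hb' : b = 1 := by linarith
        rw [← ha', hb']; simpa using hy
    show (B *ᵥ (a • x + b • y)) ⬝ᵥ (a • x + b • y) < (a • (c₁, x, e₁) + b • (c₂, y, e₂)).2.2
    simp only [Prod.snd_add, Prod.smul_snd, smul_eq_mul]
    calc (B *ᵥ (a • x + b • y)) ⬝ᵥ (a • x + b • y)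
        ≤ a * ((B *ᵥ x) ⬝ᵥ x) + b * ((B *ᵥ y) ⬝ᵥ y) := by
          rw [key]; nlinarith [mul_nonneg ha hb]
      _ < a * e₁ + b * e₂ := hlt

section quad
variable {m : ℕ} {B₁ B₂ : Matrix (Fin m) (Fin m) ℝ}

lemma quad_ineq (h₁ : B₁.PosDef) (h₂ : B₂.PosDef) (y z : Fin m → ℝ) :
    ((B₁⁻¹ + B₂⁻¹)⁻¹ *ᵥ (y + z)) ⬝ᵥ (y + z)
      ≤ (B₁ *ᵥ y) ⬝ᵥ y + (B₂ *ᵥ z) ⬝ᵥ z := by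
  have hS : (B₁⁻¹ + B₂⁻¹).PosDef := h₁.inv.add h₂.inv
  set C := (B₁⁻¹ + B₂⁻¹)⁻¹ with hCdef
  set w := y + z with hw
  set y₀ := B₁⁻¹ *ᵥ (C *ᵥ w) with hy₀
  set z₀ := B₂⁻¹ *ᵥ (C *ᵥ w) with hz₀
  have hB1 : B₁ *ᵥ y₀ = C *ᵥ w := by
    rw [hy₀, Matrix.mulVec_mulVec, Matrix.mul_nonsing_inv _ h₁.det_pos.ne'.isUnit, Matrix.one_mulVec]
  have hB2 : B₂ *ᵥ z₀ = C *ᵥ w := by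
    rw [hz₀, Matrix.mulVec_mulVec, Matrix.mul_nonsing_inv _ h₂.det_pos.ne'.isUnit, Matrix.one_mulVec]
  have hsum : y₀ + z₀ = w := by
    rw [hy₀, hz₀, ← Matrix.add_mulVec, Matrix.mulVec_mulVec,
      Matrix.mul_nonsing_inv _ hS.det_pos.ne'.isUnit, Matrix.one_mulVec]
  set d := y - y₀ with hd
  have hy' : y = y₀ + d := by rw [hd]; abel
  have hz' : z = z₀ + -d := by
    have : z = w - y := by rw [hw]; abel
    rw [this, ← hsum, hy']; abel
  have e1 : (B₁ *ᵥ y) ⬝ᵥ y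
      = (B₁ *ᵥ y₀) ⬝ᵥ y₀ + 2 * ((B₁ *ᵥ y₀) ⬝ᵥ d) + (B₁ *ᵥ d) ⬝ᵥ d := by
    rw [hy']; exact q_expand h₁.1 y₀ d
  have e2 : (B₂ *ᵥ z) ⬝ᵥ z
      = (B₂ *ᵥ z₀) ⬝ᵥ z₀ - 2 * ((B₂ *ᵥ z₀) ⬝ᵥ d) + (B₂ *ᵥ d) ⬝ᵥ d := by
    rw [hz', q_expand h₂.1 z₀ (-d)]
    simp only [Matrix.mulVec_neg, neg_dotProduct, dotProduct_neg, neg_neg]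
    ring
  have hq0 : (B₁ *ᵥ y₀) ⬝ᵥ y₀ + (B₂ *ᵥ z₀) ⬝ᵥ z₀ = (C *ᵥ w) ⬝ᵥ w := by
    rw [hB1, hB2, ← dotProduct_add, hsum]
  have hd1 := q_nonneg h₁.posSemidef d
  have hd2 := q_nonneg h₂.posSemidef d
  have hcross : (B₁ *ᵥ y₀) ⬝ᵥ d = (B₂ *ᵥ z₀) ⬝ᵥ d := by rw [hB1, hB2]
  linarith [e1, e2]

end quad

theorem stmt19 (m : ℕ) (B₁ B₂ : Matrix (Fin m) (Fin m) ℝ)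
    (h₁ : B₁.PosDef) (h₂ : B₂.PosDef) :
    convexHull ℝ
        ({p : ℝ × (Fin m → ℝ) × ℝ | p.1 = -1 ∧ (B₁ *ᵥ p.2.1) ⬝ᵥ p.2.1 < p.2.2} ∪
          {p : ℝ × (Fin m → ℝ) × ℝ | p.1 = 1 ∧ (B₂ *ᵥ p.2.1) ⬝ᵥ p.2.1 < p.2.2}) ∩
        {p : ℝ × (Fin m → ℝ) × ℝ | p.1 = 0} =
      {p : ℝ × (Fin m → ℝ) × ℝ | p.1 = 0 ∧
        2 * (((B₁⁻¹ + B₂⁻¹)⁻¹ *ᵥ p.2.1) ⬝ᵥ p.2.1) < p.2.2} := by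
  have hS : (B₁⁻¹ + B₂⁻¹).PosDef := h₁.inv.add h₂.inv
  set C := (B₁⁻¹ + B₂⁻¹)⁻¹ with hCdef
  set P₁ : Set (ℝ × (Fin m → ℝ) × ℝ) :=
    {p | p.1 = -1 ∧ (B₁ *ᵥ p.2.1) ⬝ᵥ p.2.1 < p.2.2} with hP₁
  set P₂ : Set (ℝ × (Fin m → ℝ) × ℝ) :=
    {p | p.1 = 1 ∧ (B₂ *ᵥ p.2.1) ⬝ᵥ p.2.1 < p.2.2} with hP₂
  have hc₁ : Convex ℝ P₁ := conv_epi h₁.posSemidef (-1)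
  have hc₂ : Convex ℝ P₂ := conv_epi h₂.posSemidef 1
  have hn₁ : P₁.Nonempty := ⟨(-1, 0, 1), by simp [hP₁]⟩
  have hn₂ : P₂.Nonempty := ⟨(1, 0, 1), by simp [hP₂]⟩
  ext ⟨t, x, e⟩
  constructor
  · rintro ⟨hhull, ht⟩
    have ht : t = 0 := ht
    rw [hc₁.convexHull_union hc₂ hn₁ hn₂, mem_convexJoin] at hhull
    obtain ⟨⟨t₁, y, e₁⟩, ⟨ht₁, hy⟩, ⟨t₂, z, e₂⟩, ⟨ht₂, hz⟩, a, b, ha, hb, hab, heq⟩ := hhull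
    simp only at ht₁ ht₂; subst ht₁; subst ht₂
    have heq1 : a * (-1) + b * 1 = t := congrArg Prod.fst heq
    have ha' : a = 1/2 := by rw [ht] at heq1; linarith
    have hb' : b = 1/2 := by linarith
    subst ha'; subst hb'
    have heq2 : (1/2 : ℝ) • y + (1/2 : ℝ) • z = x := congrArg (fun p => p.2.1) heq
    have heq3 : (1/2 : ℝ) * e₁ + (1/2 : ℝ) * e₂ = e := congrArg (fun p => p.2.2) heq
    refine ⟨ht, ?_⟩
    have key := quad_ineq h₁ h₂ y z
    have hyz : y + z = (2 : ℝ) • x := by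
      rw [← heq2]; module
    rw [hyz] at key
    have hsc : (C *ᵥ ((2:ℝ) • x)) ⬝ᵥ ((2:ℝ) • x) = 4 * ((C *ᵥ x) ⬝ᵥ x) := by
      rw [Matrix.mulVec_smul, smul_dotProduct, dotProduct_smul]
      simp [smul_eq_mul]; ring
    rw [hsc] at key
    linarith
  · rintro ⟨ht, he⟩
    have ht : t = 0 := ht
    subst ht
    set a := C *ᵥ x with hadef
    set y₀ := (2 : ℝ) • (B₁⁻¹ *ᵥ a) with hy₀
    set z₀ := (2 : ℝ) • (B₂⁻¹ *ᵥ a) with hz₀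
    set δ := e - 2 * ((C *ᵥ x) ⬝ᵥ x) with hδ
    have hδpos : 0 < δ := by rw [hδ]; linarith
    have hB1 : B₁ *ᵥ y₀ = (2:ℝ) • a := by
      rw [hy₀, Matrix.mulVec_smul, Matrix.mulVec_mulVec,
        Matrix.mul_nonsing_inv _ h₁.det_pos.ne'.isUnit, Matrix.one_mulVec]
    have hB2 : B₂ *ᵥ z₀ = (2:ℝ) • a := by
      rw [hz₀, Matrix.mulVec_smul, Matrix.mulVec_mulVec,
        Matrix.mul_nonsing_inv _ h₂.det_pos.ne'.isUnit, Matrix.one_mulVec]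
    have hsum : B₁⁻¹ *ᵥ a + B₂⁻¹ *ᵥ a = x := by
      rw [hadef, ← Matrix.add_mulVec, Matrix.mulVec_mulVec,
        Matrix.mul_nonsing_inv _ hS.det_pos.ne'.isUnit, Matrix.one_mulVec]
    have hq1 : (B₁ *ᵥ y₀) ⬝ᵥ y₀ = 4 * (a ⬝ᵥ (B₁⁻¹ *ᵥ a)) := by
      rw [hB1, hy₀, smul_dotProduct, dotProduct_smul]
      simp [smul_eq_mul]; ring
    have hq2 : (B₂ *ᵥ z₀) ⬝ᵥ z₀ = 4 * (a ⬝ᵥ (B₂⁻¹ *ᵥ a)) := by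
      rw [hB2, hz₀, smul_dotProduct, dotProduct_smul]
      simp [smul_eq_mul]; ring
    have hqsum : (B₁ *ᵥ y₀) ⬝ᵥ y₀ + (B₂ *ᵥ z₀) ⬝ᵥ z₀ = 4 * ((C *ᵥ x) ⬝ᵥ x) := by
      rw [hq1, hq2, ← mul_add, ← dotProduct_add, hsum, dotProduct_comm]
    set p₁ : ℝ × (Fin m → ℝ) × ℝ := (-1, y₀, (B₁ *ᵥ y₀) ⬝ᵥ y₀ + δ) with hp₁
    set p₂ : ℝ × (Fin m → ℝ) × ℝ := (1, z₀, (B₂ *ᵥ z₀) ⬝ᵥ z₀ + δ) with hp₂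
    have hm₁ : p₁ ∈ P₁ := ⟨rfl, by simpa [hp₁] using hδpos⟩
    have hm₂ : p₂ ∈ P₂ := ⟨rfl, by simpa [hp₂] using hδpos⟩
    have hmem : (1/2 : ℝ) • p₁ + (1/2 : ℝ) • p₂ ∈ convexHull ℝ (P₁ ∪ P₂) :=
      (convex_convexHull ℝ (P₁ ∪ P₂))
        (subset_convexHull ℝ _ (Set.mem_union_left _ hm₁))
        (subset_convexHull ℝ _ (Set.mem_union_right _ hm₂))
        (by norm_num) (by norm_num) (by norm_num)
    have hpt : (1/2 : ℝ) • p₁ + (1/2 : ℝ) • p₂ = ((0 : ℝ), x, e) := by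
      rw [hp₁, hp₂]
      refine Prod.ext (by norm_num) (Prod.ext ?_ ?_)
      · show (1/2 : ℝ) • y₀ + (1/2 : ℝ) • z₀ = x
        rw [hy₀, hz₀, smul_smul, smul_smul]
        norm_num
        exact hsum
      · show (1/2 : ℝ) * ((B₁ *ᵥ y₀) ⬝ᵥ y₀ + δ) + (1/2 : ℝ) * ((B₂ *ᵥ z₀) ⬝ᵥ z₀ + δ) = e
        have := hqsum
        rw [hδ] at *
        linarith
    rw [hpt] at hmem
    exact ⟨hmem, rfl⟩
end
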